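/- Let d ≥ 1, α > 0 with 2α < d, and let ρ be a probability measure on ℝ^d whose characteristic function satisfies ρ̂(z) = exp(−‖z‖^α) for all z ∈ ℝ^d (a symmetric α-stable distribution). Let U := Σ_{n=0}^∞ ρ^{*n} and U⁻ := Σ_{n=0}^∞ (ρ⁻)^{*n} with ρ⁻ := ρ(−·). Then (U * U⁻)(B_0^r) < ∞ for every r > 0, i.e. U * U⁻ is a locally finite measure. -/

import Mathlib

/-!
Write `U * U⁻ = ∑_{m,n} ρ^{*m} * (ρ⁻)^{*n}`; the `(m, n)`-th term is a probability measure `μ` with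
`μ̂(z) = exp (-(m + n) ‖z‖^α)`. Testing `μ` against a Gaussian gives
`μ(B_0^r) ≤ e^{r²/2} ∫ e^{-‖x‖²/2} dμ`, and by Fubini and the Fourier transform of the Gaussian
this integral equals `(2π)^{-d/2} ∫ e^{-‖z‖²/2} μ̂(z) dz`. Bounding the Gaussian factor by `1` and
rescaling `z ↦ t^{1/α} z` makes this `O((1 + t)^{-d/α})` for `μ̂ = exp (-t ‖·‖^α)`. Hence the terms
are `O((1 + m + n)^{-d/α})`, and since `(1 + m + n)² ≥ (1 + m)(1 + n)` their sum over `ℕ²` is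
dominated by the square of a `p`-series with exponent `d / (2α) > 1`.
-/

open MeasureTheory

/-- Convolution of two measures on `ℝ^d`: the pushforward of the product measure
under addition. -/
noncomputable def mconv {d : ℕ} (μ ν : Measure (EuclideanSpace ℝ (Fin d))) :
    Measure (EuclideanSpace ℝ (Fin d)) :=
  Measure.map (fun p => p.1 + p.2) (μ.prod ν)

/-- Convolution powers: `ρ^{*0} = δ_0`, `ρ^{*(n+1)} = ρ^{*n} * ρ`. -/
noncomputable def convPow {d : ℕ} (ρ : Measure (EuclideanSpace ℝ (Fin d))) :
    ℕ → Measure (EuclideanSpace ℝ (Fin d))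
  | 0 => Measure.dirac 0
  | n + 1 => mconv (convPow ρ n) ρ

/-- Expected occupation measure `U = Σ_{n≥0} ρ^{*n}` of the random walk with step
distribution `ρ`. -/
noncomputable def occMeasure {d : ℕ} (ρ : Measure (EuclideanSpace ℝ (Fin d))) :
    Measure (EuclideanSpace ℝ (Fin d)) :=
  Measure.sum (fun n => convPow ρ n)

/-- Reflected measure `ρ⁻ = ρ(−·)`. -/
noncomputable def mrefl {d : ℕ} (ρ : Measure (EuclideanSpace ℝ (Fin d))) :
    Measure (EuclideanSpace ℝ (Fin d)) :=
  Measure.map (fun x => -x) ρ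

open Complex Real Module
open scoped RealInnerProductSpace

lemma measure_ball_le_integral_gaussian {E : Type*} [NormedAddCommGroup E] [MeasurableSpace E]
    [OpensMeasurableSpace E] (μ : Measure E) [IsFiniteMeasure μ] (r : ℝ) :
    μ (Metric.ball 0 r) ≤
      ENNReal.ofReal (rexp (r ^ 2 / 2) * ∫ x, rexp (-(1 / 2) * ‖x‖ ^ 2) ∂μ) := by
  have hint : Integrable (fun x : E => rexp (-(1 / 2) * ‖x‖ ^ 2)) μ :=
    .of_bound (by fun_prop) 1 (ae_of_all _ fun x => by
      rw [Real.norm_of_nonneg (exp_nonneg _), exp_le_one_iff]; nlinarith [sq_nonneg ‖x‖])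
  have hmarkov := mul_meas_ge_le_integral_of_nonneg (ae_of_all _ fun _ => (exp_nonneg _)) hint
    (rexp (-(r ^ 2 / 2)))
  have hball : Metric.ball (0 : E) r ⊆ {x | rexp (-(r ^ 2 / 2)) ≤ rexp (-(1 / 2) * ‖x‖ ^ 2)} := by
    intro x hx
    rw [mem_ball_zero_iff] at hx
    simp only [Set.mem_ofPred_eq, exp_le_exp]
    nlinarith [norm_nonneg x]
  rw [← ofReal_measureReal]
  refine ENNReal.ofReal_le_ofReal ((measureReal_mono hball).trans ?_)
  calc _ ≤ (∫ x, rexp (-(1 / 2) * ‖x‖ ^ 2) ∂μ) / rexp (-(r ^ 2 / 2)) :=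
        (le_div_iff₀' (exp_pos _)).2 hmarkov
    _ = _ := by rw [div_eq_mul_inv, ← Real.exp_neg, neg_neg, mul_comm]

lemma mul_norm_rpow_eq_norm_rpow_smul {V : Type*} [NormedAddCommGroup V] [NormedSpace ℝ V] {α t : ℝ}
    (hα : 0 < α) (ht : 0 ≤ t) (z : V) : t * ‖z‖ ^ α = ‖t ^ α⁻¹ • z‖ ^ α := by
  rw [norm_smul, Real.norm_of_nonneg (by positivity), mul_rpow (by positivity) (norm_nonneg _),
    ← rpow_mul ht, inv_mul_cancel₀ hα.ne', rpow_one]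

section StableIntegrals

variable {V : Type*} [NormedAddCommGroup V] [NormedSpace ℝ V] [FiniteDimensional ℝ V]
  [MeasurableSpace V] [BorelSpace V] (μ : Measure V) [μ.IsAddHaarMeasure] {α : ℝ}

lemma integrable_exp_neg_norm_rpow [Nontrivial V] (hα : 0 < α) :
    Integrable (fun z => rexp (-‖z‖ ^ α)) μ := by
  -- The unit ball has positive measure, which is a multiple of this integral: not the junk `0`.
  refine .of_integral_ne_zero fun h => (Metric.measure_ball_pos μ (0 : V) one_pos).ne' ?_
  rw [measure_unitBall_eq_integral_div_gamma μ hα, h, zero_div, ENNReal.ofReal_zero]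

lemma integral_exp_neg_mul_norm_rpow (hα : 0 < α) {t : ℝ} (ht : 0 < t) :
    ∫ z, rexp (-(t * ‖z‖ ^ α)) ∂μ = t ^ (-(finrank ℝ V / α)) * ∫ z, rexp (-‖z‖ ^ α) ∂μ := by
  simp_rw [mul_norm_rpow_eq_norm_rpow_smul hα ht.le]
  rw [Measure.integral_comp_smul_of_nonneg μ (fun z => rexp (-‖z‖ ^ α)) _ (hR := by positivity),
    smul_eq_mul, ← rpow_natCast, ← rpow_mul ht.le, ← rpow_neg ht.le]
  ring_nf

lemma integrable_exp_neg_mul_norm_rpow [Nontrivial V] (hα : 0 < α) {t : ℝ} (ht : 0 < t) :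
    Integrable (fun z => rexp (-(t * ‖z‖ ^ α))) μ := by
  simp_rw [mul_norm_rpow_eq_norm_rpow_smul hα ht.le]
  exact (integrable_exp_neg_norm_rpow μ hα).comp_smul (by positivity)

end StableIntegrals

lemma rpow_neg_le_two_rpow_mul_one_add_rpow_neg {p t : ℝ} (hp : 0 ≤ p) (ht : 1 ≤ t) :
    t ^ (-p) ≤ 2 ^ p * (1 + t) ^ (-p) := by
  rw [rpow_neg (by positivity), rpow_neg (by positivity), ← div_eq_mul_inv, ← div_rpow
    (by norm_num) (by positivity), ← inv_rpow (by positivity)]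
  refine rpow_le_rpow (by positivity) ?_ hp
  rw [inv_eq_one_div, div_le_div_iff₀ (by positivity) (by positivity)]
  linarith

lemma one_le_two_rpow_mul_one_add_rpow_neg {p t : ℝ} (hp : 0 ≤ p) (ht₀ : 0 ≤ t) (ht : t ≤ 1) :
    1 ≤ 2 ^ p * (1 + t) ^ (-p) := by
  rw [rpow_neg (by positivity), ← div_eq_mul_inv, ← div_rpow (by norm_num) (by positivity)]
  exact one_le_rpow (by rw [le_div_iff₀ (by positivity)]; linarith) hp

section Gaussian

variable {V : Type*} [NormedAddCommGroup V] [InnerProductSpace ℝ V] [FiniteDimensional ℝ V]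
  [MeasurableSpace V] [BorelSpace V]

lemma integrable_exp_neg_half_mul_sq_norm :
    Integrable (fun z : V => rexp (-(1 / 2) * ‖z‖ ^ 2)) := by
  refine .of_integral_ne_zero ?_
  rw [GaussianFourier.integral_rexp_neg_mul_sq_norm (by norm_num)]
  positivity

lemma integral_gaussian_mul_charFun (μ : Measure V) [IsFiniteMeasure μ] :
    ∫ z, rexp (-(1 / 2) * ‖z‖ ^ 2) * charFun μ z =
      (2 * π) ^ (finrank ℝ V / 2 : ℂ) * ∫ x, rexp (-(1 / 2) * ‖x‖ ^ 2) ∂μ := by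
  set F : V → V → ℂ := fun z x => cexp (-(1 / 2 : ℂ) * ‖z‖ ^ 2 + I * ⟪x, z⟫)
  have hF : Integrable (Function.uncurry F) (volume.prod μ) := by
    refine ((integrable_exp_neg_half_mul_sq_norm (V := V)).mul_prod
      (integrable_const (1 : ℝ))).mono' (by fun_prop) (ae_of_all _ fun p => ?_)
    rw [Function.uncurry_apply_pair, Complex.norm_exp]
    simp [← ofReal_pow]
  have hinner (z : V) : ∫ x, F z x ∂μ = rexp (-(1 / 2) * ‖z‖ ^ 2) * charFun μ z := by
    simp only [F, Complex.exp_add, charFun_apply, ← integral_const_mul]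
    push_cast
    simp_rw [mul_comm I]
  have houter (x : V) :
      ∫ z, F z x = (2 * π) ^ (finrank ℝ V / 2 : ℂ) * (rexp (-(1 / 2) * ‖x‖ ^ 2) : ℂ) := by
    rw [GaussianFourier.integral_cexp_neg_mul_sq_norm_add (by norm_num)]
    push_cast
    congr 2 <;> ring_nf
    simp only [I_sq]
    ring
  calc ∫ z, rexp (-(1 / 2) * ‖z‖ ^ 2) * charFun μ z = ∫ z, ∫ x, F z x ∂μ := by
        simp_rw [hinner]
    _ = ∫ x, (∫ z, F z x) ∂μ := integral_integral_swap hF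
    _ = _ := by simp_rw [houter]; rw [integral_const_mul, integral_complex_ofReal]

lemma exists_integral_gaussian_mul_exp_neg_mul_norm_rpow_le [Nontrivial V] {α : ℝ} (hα : 0 < α) :
    ∃ C, ∀ t, 0 ≤ t → ∫ z : V, rexp (-(1 / 2) * ‖z‖ ^ 2) * rexp (-(t * ‖z‖ ^ α)) ≤
      C * (1 + t) ^ (-(finrank ℝ V / α)) := by
  set p := (finrank ℝ V / α : ℝ)
  have hp : 0 ≤ p := by positivity
  set G := ∫ z : V, rexp (-(1 / 2) * ‖z‖ ^ 2)
  set K := ∫ z : V, rexp (-‖z‖ ^ α)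
  have hG : 0 ≤ G := integral_nonneg fun _ => exp_nonneg _
  have hK : 0 ≤ K := integral_nonneg fun _ => exp_nonneg _
  refine ⟨2 ^ p * max G K, fun t ht => ?_⟩
  have hgauss_le_one (z : V) : rexp (-(1 / 2) * ‖z‖ ^ 2) ≤ 1 :=
    exp_le_one_iff.2 (by nlinarith [sq_nonneg ‖z‖])
  have hstable_le_one (z : V) : rexp (-(t * ‖z‖ ^ α)) ≤ 1 :=
    exp_le_one_iff.2 (by have := rpow_nonneg (norm_nonneg z) α; nlinarith)
  rcases le_total t 1 with ht₁ | ht₁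
  · calc ∫ z : V, rexp (-(1 / 2) * ‖z‖ ^ 2) * rexp (-(t * ‖z‖ ^ α))
        ≤ G := integral_mono_of_nonneg (ae_of_all _ fun _ => by positivity)
          integrable_exp_neg_half_mul_sq_norm (ae_of_all _ fun z =>
            mul_le_of_le_one_right (exp_nonneg _) (hstable_le_one z))
      _ ≤ 2 ^ p * (1 + t) ^ (-p) * max G K := le_mul_of_one_le_left hG
          (one_le_two_rpow_mul_one_add_rpow_neg hp ht ht₁) |>.trans
          (mul_le_mul_of_nonneg_left (le_max_left _ _) (by positivity))
      _ = _ := by ring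
  · have ht₀ : 0 < t := by linarith
    calc ∫ z : V, rexp (-(1 / 2) * ‖z‖ ^ 2) * rexp (-(t * ‖z‖ ^ α))
        ≤ ∫ z : V, rexp (-(t * ‖z‖ ^ α)) :=
          integral_mono_of_nonneg (ae_of_all _ fun _ => by positivity)
            (integrable_exp_neg_mul_norm_rpow volume hα ht₀) (ae_of_all _ fun z =>
              mul_le_of_le_one_left (exp_nonneg _) (hgauss_le_one z))
      _ = t ^ (-p) * K := integral_exp_neg_mul_norm_rpow volume hα ht₀
      _ ≤ 2 ^ p * (1 + t) ^ (-p) * max G K := mul_le_mul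
          (rpow_neg_le_two_rpow_mul_one_add_rpow_neg hp ht₁) (le_max_right _ _) hK (by positivity)
      _ = _ := by ring

lemma exists_measure_ball_le_of_charFun_eq [Nontrivial V] {α : ℝ} (hα : 0 < α) (r : ℝ) :
    ∃ C, ∀ (μ : Measure V) [IsFiniteMeasure μ] (t : ℝ), 0 ≤ t →
      (∀ z, charFun μ z = rexp (-(t * ‖z‖ ^ α))) →
        μ (Metric.ball 0 r) ≤ ENNReal.ofReal (C * (1 + t) ^ (-(finrank ℝ V / α))) := by
  obtain ⟨C, hC⟩ := exists_integral_gaussian_mul_exp_neg_mul_norm_rpow_le (V := V) hα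
  refine ⟨rexp (r ^ 2 / 2) * ((2 * π) ^ (-(finrank ℝ V / 2 : ℝ)) * C),
    fun μ _ t ht hchar => (measure_ball_le_integral_gaussian μ r).trans ?_⟩
  have h2π : 0 < (2 * π) ^ (finrank ℝ V / 2 : ℝ) := by positivity
  have hparseval : (2 * π) ^ (finrank ℝ V / 2 : ℝ) * ∫ x, rexp (-(1 / 2) * ‖x‖ ^ 2) ∂μ =
      ∫ z : V, rexp (-(1 / 2) * ‖z‖ ^ 2) * rexp (-(t * ‖z‖ ^ α)) := by
    have h := integral_gaussian_mul_charFun μ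
    simp_rw [hchar, ← ofReal_mul, integral_complex_ofReal] at h
    rw [← ofReal_inj, ofReal_mul, ofReal_cpow (by positivity), h]
    push_cast
    rfl
  refine ENNReal.ofReal_le_ofReal ?_
  calc rexp (r ^ 2 / 2) * ∫ x, rexp (-(1 / 2) * ‖x‖ ^ 2) ∂μ
      = rexp (r ^ 2 / 2) * ((2 * π) ^ (-(finrank ℝ V / 2 : ℝ)) *
          ∫ z : V, rexp (-(1 / 2) * ‖z‖ ^ 2) * rexp (-(t * ‖z‖ ^ α))) := by
        rw [← hparseval, rpow_neg (by positivity), inv_mul_cancel_left₀ h2π.ne']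
    _ ≤ rexp (r ^ 2 / 2) * ((2 * π) ^ (-(finrank ℝ V / 2 : ℝ)) *
          (C * (1 + t) ^ (-(finrank ℝ V / α)))) := by
        gcongr
        exact hC t ht
    _ = _ := by ring

end Gaussian

lemma MeasureTheory.Measure.sum_conv_sum {M ι κ : Type*} [AddMonoid M] [MeasurableSpace M]
    [MeasurableAdd₂ M] [Countable κ] (μ : ι → Measure M) (ν : κ → Measure M) [∀ j, SFinite (ν j)] :
    Measure.sum μ ∗ Measure.sum ν = Measure.sum fun p : ι × κ => μ p.1 ∗ ν p.2 := by
  simp only [Measure.conv, Measure.prod_sum]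
  exact Measure.map_sum measurable_add.aemeasurable

lemma summable_one_add_add_rpow_neg {p : ℝ} (hp : 2 < p) :
    Summable fun mn : ℕ × ℕ => (1 + (mn.1 + mn.2 : ℝ)) ^ (-p) := by
  have hhalf : Summable fun n : ℕ => ((n : ℝ) + 1) ^ (-(p / 2)) := by
    simpa using (summable_nat_add_iff 1).2 (summable_nat_rpow.2 (by linarith : -(p / 2) < -1))
  refine .of_nonneg_of_le (fun _ => by positivity) (fun ⟨m, n⟩ => ?_)
    (hhalf.mul_of_nonneg hhalf (fun _ => by positivity) fun _ => by positivity)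
  have hm : (0 : ℝ) ≤ m := m.cast_nonneg
  have hn : (0 : ℝ) ≤ n := n.cast_nonneg
  rw [← mul_rpow (by positivity) (by positivity)]
  calc (1 + (m + n : ℝ)) ^ (-p) = ((1 + (m + n : ℝ)) ^ 2) ^ (-(p / 2)) := by
        rw [← rpow_natCast, ← rpow_mul (by positivity)]
        ring_nf
    _ ≤ (((m : ℝ) + 1) * ((n : ℝ) + 1)) ^ (-(p / 2)) :=
        rpow_le_rpow_of_nonpos (by positivity) (by nlinarith) (by linarith)

section RandomWalk

variable {d : ℕ}

lemma mconv_eq_conv (μ ν : Measure (EuclideanSpace ℝ (Fin d))) : mconv μ ν = μ ∗ ν := rfl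

instance isProbabilityMeasure_convPow (ρ : Measure (EuclideanSpace ℝ (Fin d)))
    [IsProbabilityMeasure ρ] (n : ℕ) :
    IsProbabilityMeasure (convPow ρ n) := by
  induction n with
  | zero => rw [convPow]; infer_instance
  | succ n ih => rw [convPow, mconv_eq_conv]; infer_instance

instance isProbabilityMeasure_mrefl (ρ : Measure (EuclideanSpace ℝ (Fin d)))
    [IsProbabilityMeasure ρ] : IsProbabilityMeasure (mrefl ρ) :=
  Measure.isProbabilityMeasure_map (by fun_prop)

lemma charFun_convPow (ρ : Measure (EuclideanSpace ℝ (Fin d))) [IsProbabilityMeasure ρ] (n : ℕ)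
    (t : EuclideanSpace ℝ (Fin d)) : charFun (convPow ρ n) t = charFun ρ t ^ n := by
  induction n with
  | zero => simp [convPow, charFun_dirac]
  | succ n ih => rw [convPow, mconv_eq_conv, charFun_conv, ih, pow_succ]

lemma charFun_mrefl (ρ : Measure (EuclideanSpace ℝ (Fin d))) (t : EuclideanSpace ℝ (Fin d)) :
    charFun (mrefl ρ) t = charFun ρ (-t) := by
  rw [mrefl, charFun_apply, charFun_apply, integral_map (by fun_prop) (by fun_prop)]
  simp [inner_neg_left, inner_neg_right]

lemma mconv_occMeasure_eq_sum (μ ν : Measure (EuclideanSpace ℝ (Fin d)))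
    [IsProbabilityMeasure ν] :
    mconv (occMeasure μ) (occMeasure ν) =
      Measure.sum fun mn : ℕ × ℕ => convPow μ mn.1 ∗ convPow ν mn.2 :=
  Measure.sum_conv_sum _ _

end RandomWalk

/-- If `ρ` is a symmetric `α`-stable probability distribution on `ℝ^d`
(characteristic function `exp(−‖z‖^α)`) with `2α < d`, then `U * U⁻` is locally
finite: `(U * U⁻)(B_0^r) < ∞` for every `r > 0`. -/
theorem stmt12 (d : ℕ) (hd : 1 ≤ d) (α : ℝ) (hα : 0 < α) (h2α : 2 * α < d)
    (ρ : Measure (EuclideanSpace ℝ (Fin d))) [IsProbabilityMeasure ρ]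
    (hchar : ∀ z : EuclideanSpace ℝ (Fin d),
      (∫ x, Complex.exp (Complex.I * ((inner ℝ z x : ℝ) : ℂ)) ∂ρ) =
        ((Real.exp (-(‖z‖ ^ α)) : ℝ) : ℂ)) :
    ∀ r : ℝ, 0 < r →
      mconv (occMeasure ρ) (occMeasure (mrefl ρ)) (Metric.ball 0 r) < ⊤ := by
  intro r _
  have : Nontrivial (EuclideanSpace ℝ (Fin d)) :=
    finrank_pos_iff.1 (by rw [finrank_euclideanSpace_fin]; omega)
  obtain ⟨C, hC⟩ := exists_measure_ball_le_of_charFun_eq (V := EuclideanSpace ℝ (Fin d)) hα r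
  have hρ (z : EuclideanSpace ℝ (Fin d)) : charFun ρ z = rexp (-‖z‖ ^ α) := by
    simpa only [charFun_apply, real_inner_comm, mul_comm I] using hchar z
  have hstep (m n : ℕ) (z : EuclideanSpace ℝ (Fin d)) :
      charFun (convPow ρ m ∗ convPow (mrefl ρ) n) z = rexp (-((m + n : ℝ) * ‖z‖ ^ α)) := by
    rw [charFun_conv, charFun_convPow, charFun_convPow, charFun_mrefl, hρ, hρ, norm_neg,
      ← ofReal_pow, ← ofReal_pow, ← ofReal_mul, ← Real.exp_nat_mul, ← Real.exp_nat_mul,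
      ← Real.exp_add]
    ring_nf
  have hsum := summable_one_add_add_rpow_neg (p := d / α) (by rw [lt_div_iff₀ hα]; linarith)
  rw [mconv_occMeasure_eq_sum, Measure.sum_apply _ measurableSet_ball]
  calc ∑' mn : ℕ × ℕ, (convPow ρ mn.1 ∗ convPow (mrefl ρ) mn.2) (Metric.ball 0 r)
      ≤ ∑' mn : ℕ × ℕ, ENNReal.ofReal (C * (1 + (mn.1 + mn.2 : ℝ)) ^ (-(d / α))) :=
        ENNReal.tsum_le_tsum fun mn => by
          simpa only [finrank_euclideanSpace_fin] using hC _ _ (by positivity) (hstep mn.1 mn.2)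
    -- `ENNReal.ofReal x` is `↑x.toNNReal` by definition.
    _ < ⊤ := (ENNReal.tsum_coe_ne_top_iff_summable.2 (hsum.mul_left C).toNNReal).lt_top
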